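/- For a vertex i with parent j in a discrete Bayesian network, the edge strength satisfies δ_{ji} ≤ d⁺(P_i), and the diameter of the full CPT is bounded by the sum of edge strengths over all parents: d⁺(P_i) ≤ ∑_{j ∈ Π_i} δ_{ji}. Moreover, if i has exactly one parent j, then δ_{ji} = d⁺(P_i). -/
import Mathlib


open Finset

/-- Total variation distance between two functions viewed as pmfs on a finite set. -/
noncomputable def tv {X : Type*} [Fintype X] (p q : X → ℝ) : ℝ :=
  (1/2) * ∑ x, |p x - q x|

/-- `p` is a probability mass function on a finite set. -/
def IsPmf {X : Type*} [Fintype X] (p : X → ℝ) : Prop :=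
  (∀ x, 0 ≤ p x) ∧ ∑ x, p x = 1

/-- The (upper) diameter of a stochastic matrix: the largest total variation
distance between any two of its rows. -/
noncomputable def diam {I X : Type*} [Fintype I] [Fintype X] (P : I → X → ℝ) : ℝ :=
  ⨆ i : I, ⨆ j : I, tv (P i) (P j)

/-- Edge strength of parent `a` in a CPT indexed by parent configurations:
the largest diameter among sub-CPTs obtained by fixing all other parents. -/
noncomputable def edgeStrength {ι : Type*} [Fintype ι] [DecidableEq ι]
    {S : ι → Type*} [∀ a, Fintype (S a)] {V : Type*} [Fintype V]
    (P : (∀ a, S a) → V → ℝ) (a : ι) : ℝ :=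
  ⨆ x : ∀ b, S b, ⨆ y : S a, ⨆ y' : S a,
    tv (P (Function.update x a y)) (P (Function.update x a y'))

lemma tv_self {X : Type*} [Fintype X] (p : X → ℝ) : tv p p = 0 := by simp [tv]

lemma tv_triangle {X : Type*} [Fintype X] (p q r : X → ℝ) :
    tv p r ≤ tv p q + tv q r := by
  unfold tv
  rw [← mul_add, ← Finset.sum_add_distrib]
  gcongr with x _
  exact abs_sub_le _ _ _

lemma le_diam {I X : Type*} [Fintype I] [Fintype X] (P : I → X → ℝ) (i j : I) :
    tv (P i) (P j) ≤ diam P := by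
  have h1 : tv (P i) (P j) ≤ ⨆ j, tv (P i) (P j) :=
    le_ciSup (f := fun j => tv (P i) (P j)) (Set.Finite.bddAbove (Set.finite_range _)) j
  have h2 : (⨆ j, tv (P i) (P j)) ≤ diam P :=
    le_ciSup (f := fun i => ⨆ j, tv (P i) (P j)) (Set.Finite.bddAbove (Set.finite_range _)) i
  exact h1.trans h2

lemma diam_le {I X : Type*} [Fintype I] [Nonempty I] [Fintype X] (P : I → X → ℝ) (c : ℝ)
    (h : ∀ i j, tv (P i) (P j) ≤ c) : diam P ≤ c :=
  ciSup_le fun i => ciSup_le fun j => h i j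

lemma le_edgeStrength {ι : Type*} [Fintype ι] [DecidableEq ι]
    {S : ι → Type*} [∀ a, Fintype (S a)] {V : Type*} [Fintype V]
    (P : (∀ a, S a) → V → ℝ) (a : ι) (x : ∀ b, S b) (y y' : S a) :
    tv (P (Function.update x a y)) (P (Function.update x a y')) ≤ edgeStrength P a := by
  have h1 : tv (P (Function.update x a y)) (P (Function.update x a y')) ≤
      ⨆ y' : S a, tv (P (Function.update x a y)) (P (Function.update x a y')) :=
    le_ciSup (f := fun y' => tv (P (Function.update x a y)) (P (Function.update x a y')))
      (Set.Finite.bddAbove (Set.finite_range _)) y'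
  have h2 : (⨆ y' : S a, tv (P (Function.update x a y)) (P (Function.update x a y'))) ≤
      ⨆ y : S a, ⨆ y' : S a, tv (P (Function.update x a y)) (P (Function.update x a y')) :=
    le_ciSup (f := fun y => ⨆ y' : S a,
      tv (P (Function.update x a y)) (P (Function.update x a y')))
      (Set.Finite.bddAbove (Set.finite_range _)) y
  have h3 : (⨆ y : S a, ⨆ y' : S a,
      tv (P (Function.update x a y)) (P (Function.update x a y'))) ≤ edgeStrength P a :=
    le_ciSup (f := fun x => ⨆ y : S a, ⨆ y' : S a,
      tv (P (Function.update x a y)) (P (Function.update x a y')))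
      (Set.Finite.bddAbove (Set.finite_range _)) x
  exact h1.trans (h2.trans h3)

lemma edgeStrength_le {ι : Type*} [Fintype ι] [DecidableEq ι]
    {S : ι → Type*} [∀ a, Fintype (S a)] [∀ a, Nonempty (S a)] {V : Type*} [Fintype V]
    (P : (∀ a, S a) → V → ℝ) (a : ι) (c : ℝ)
    (h : ∀ (x : ∀ b, S b) (y y' : S a),
      tv (P (Function.update x a y)) (P (Function.update x a y')) ≤ c) :
    edgeStrength P a ≤ c :=
  ciSup_le fun x => ciSup_le fun y => ciSup_le fun y' => h x y y'

theorem stmt14 {ι : Type*} [Fintype ι] [DecidableEq ι]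
    {S : ι → Type*} [∀ a, Fintype (S a)] [∀ a, Nonempty (S a)]
    {V : Type*} [Fintype V]
    (P : (∀ a, S a) → V → ℝ) (hP : ∀ x, IsPmf (P x)) :
    (∀ a, edgeStrength P a ≤ diam P) ∧
    diam P ≤ ∑ a, edgeStrength P a ∧
    (∀ a, (∀ b, b = a) → edgeStrength P a = diam P) := by
  have h1 : ∀ a, edgeStrength P a ≤ diam P := fun a =>
    edgeStrength_le P a _ (fun x y y' => le_diam P _ _)
  refine ⟨h1, ?_, ?_⟩
  · refine diam_le P _ fun x y => ?_
    -- hybrid argument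
    set z : Finset ι → ∀ b, S b := fun s b => if b ∈ s then y b else x b with hz
    have key : ∀ s : Finset ι, tv (P x) (P (z s)) ≤ ∑ a ∈ s, edgeStrength P a := by
      intro s
      induction s using Finset.induction with
      | empty => simp [hz, tv_self]
      | @insert a s ha ih =>
        have h2 : z (insert a s) = Function.update (z s) a (y a) := by
          funext b
          by_cases hb : b = a
          · subst hb; simp [hz]
          · simp [hz, Function.update_of_ne hb, hb]
        have h3 : z s = Function.update (z s) a (x a) := by
          funext b
          by_cases hb : b = a
          · subst hb; simp [hz, ha]
          · simp [Function.update_of_ne hb]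
        calc tv (P x) (P (z (insert a s)))
            ≤ tv (P x) (P (z s)) + tv (P (z s)) (P (z (insert a s))) :=
              tv_triangle _ _ _
          _ ≤ (∑ b ∈ s, edgeStrength P b) + edgeStrength P a := by
              refine add_le_add ih ?_
              rw [h2]
              nth_rewrite 1 [h3]
              exact le_edgeStrength P a (z s) (x a) (y a)
          _ = ∑ b ∈ insert a s, edgeStrength P b := by
              rw [Finset.sum_insert ha]; ring
    have hy : z Finset.univ = y := by funext b; simp [hz]
    calc tv (P x) (P y) = tv (P x) (P (z Finset.univ)) := by rw [hy]
      _ ≤ ∑ a, edgeStrength P a := key _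
  · intro a hall
    refine le_antisymm (h1 a) ?_
    refine diam_le P _ fun u v => ?_
    have hu : u = Function.update u a (u a) := (Function.update_eq_self a u).symm
    have hv : v = Function.update u a (v a) := by
      funext b
      have : b = a := hall b
      subst this; simp
    nth_rewrite 1 [hu]
    rw [hv]
    exact le_edgeStrength P a u (u a) (v a)
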